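/- Let ε > 0 and δ > 0. There exists d₀ such that for every d ≥ d₀, every finite d-regular simple graph G, every vertex v ∈ V(G), and every p with (1+ε)/d ≤ p ≤ 1, the probability that the connected component of v in G_p has order at least d^{1/2} is at least y(ε) − δ. -/

import Mathlib

/-!
Explore the component of `v` one vertex at a time. As long as fewer than `k = ⌈√d⌉` vertices
are explored or active, the active vertex `u` being explored has at least `m = d - k`
neighbours that are neither explored nor active, and the edges to them have not been revealed
yet, so `u` contributes at least `Bin(m, p)` new active vertices. Comparing with a Galton–Watson
process, if `(1 - p + p z)^m ≤ z` then the exploration from an active set `A` dies out before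
reaching `k` vertices with probability at most `z^|A|`.

Take `z = 1 - w` with `w` slightly below `y(ε)`. Strict concavity of `t ↦ 1 - exp (-(1+ε) t)`
gives `exp (-(1+ε) w) < 1 - w`, while `(1 - p w)^(d - k) ≤ exp (-(1+ε) w (1 - k/d))`, and
`k/d → 0`.
-/

open Finset

variable {V : Type*}

/-- The number of neighbours of `v` in `G`. -/
noncomputable def degAt (G : SimpleGraph V) (v : V) : ℕ := {w | G.Adj v w}.ncard

/-- `G` is `d`-regular. -/
def IsRegOfDeg (G : SimpleGraph V) (d : ℕ) : Prop := ∀ v, degAt G v = d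

/-- The order (number of vertices) of the connected component of `v` in `H`. -/
noncomputable def compCard (H : SimpleGraph V) (v : V) : ℕ := {w | H.Reachable v w}.ncard

/-- The order of the largest connected component of `H`. -/
noncomputable def maxCompCard [Fintype V] (H : SimpleGraph V) : ℕ :=
  Finset.univ.sup (compCard H)

/-- The edge set of `G` as a `Finset`. -/
noncomputable def edgeFins (G : SimpleGraph V) [Fintype V] : Finset (Sym2 V) :=
  G.edgeSet.toFinite.toFinset

open Classical in
/-- The probability of the event `A` under bond percolation on `G` with retention
probability `p`: each edge of `G` is retained independently with probability `p`. -/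
noncomputable def percProb [Fintype V] (G : SimpleGraph V) (p : ℝ)
    (A : SimpleGraph V → Prop) : ℝ :=
  ∑ F ∈ (edgeFins G).powerset,
    if A (SimpleGraph.fromEdgeSet (↑F)) then
      p ^ F.card * (1 - p) ^ ((edgeFins G).card - F.card) else 0

open Classical in
/-- Percolation expectation of an ℝ-valued observable. -/
noncomputable def percExp [Fintype V] (G : SimpleGraph V) (p : ℝ)
    (X : SimpleGraph V → ℝ) : ℝ :=
  ∑ F ∈ (edgeFins G).powerset,
    p ^ F.card * (1 - p) ^ ((edgeFins G).card - F.card) *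
      X (SimpleGraph.fromEdgeSet (↑F))

open Classical in
/-- The probability of the event `A` under three independent bond percolations on `G`
with retention probabilities `p₁, p₂, p₃`. -/
noncomputable def percProb3 [Fintype V] (G : SimpleGraph V) (p₁ p₂ p₃ : ℝ)
    (A : SimpleGraph V → SimpleGraph V → SimpleGraph V → Prop) : ℝ :=
  ∑ F₁ ∈ (edgeFins G).powerset, ∑ F₂ ∈ (edgeFins G).powerset, ∑ F₃ ∈ (edgeFins G).powerset,
    if A (SimpleGraph.fromEdgeSet (↑F₁)) (SimpleGraph.fromEdgeSet (↑F₂))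
        (SimpleGraph.fromEdgeSet (↑F₃)) then
      (p₁ ^ F₁.card * (1 - p₁) ^ ((edgeFins G).card - F₁.card)) *
      (p₂ ^ F₂.card * (1 - p₂) ^ ((edgeFins G).card - F₂.card)) *
      (p₃ ^ F₃.card * (1 - p₃) ^ ((edgeFins G).card - F₃.card))
    else 0

/-- The Cartesian product of the graphs `Gs i`, `i : Fin t`. -/
def prodGraph {t : ℕ} {V : Fin t → Type*} (Gs : ∀ i, SimpleGraph (V i)) :
    SimpleGraph (∀ i, V i) where
  Adj u v := ∃ i, (Gs i).Adj (u i) (v i) ∧ ∀ j, j ≠ i → u j = v j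
  symm := ⟨by
    rintro u v ⟨i, hadj, h⟩
    exact ⟨i, hadj.symm, fun j hj => (h j hj).symm⟩⟩
  loopless := ⟨by
    rintro u ⟨i, hadj, -⟩
    exact (Gs i).ne_of_adj hadj rfl⟩

namespace Finset

theorem sum_powerset_union_of_disjoint {α M : Type*} [DecidableEq α] [AddCommMonoid M]
    {s t : Finset α} (hst : Disjoint s t) (f : Finset α → M) :
    ∑ F ∈ (s ∪ t).powerset, f F = ∑ F₁ ∈ s.powerset, ∑ F₂ ∈ t.powerset, f (F₁ ∪ F₂) := by
  rw [← sum_product', powerset_union, ← image_sup_product, sum_image]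
  · rfl
  rintro ⟨F₁, F₂⟩ hF ⟨G₁, G₂⟩ hG (h : F₁ ∪ F₂ = G₁ ∪ G₂)
  simp only [coe_product, Set.mem_prod, mem_coe, mem_powerset] at hF hG
  have key : ∀ {F₁ F₂ : Finset α}, F₁ ⊆ s → F₂ ⊆ t → (F₁ ∪ F₂) ∩ s = F₁ ∧ (F₁ ∪ F₂) ∩ t = F₂ :=
    fun h₁ h₂ => ⟨by grind [disjoint_left], by grind [disjoint_left]⟩
  obtain ⟨hF₁, hF₂⟩ := key hF.1 hF.2
  obtain ⟨hG₁, hG₂⟩ := key hG.1 hG.2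
  rw [h] at hF₁ hF₂
  exact Prod.ext (hF₁.symm.trans hG₁) (hF₂.symm.trans hG₂)

end Finset

section Bernoulli

variable {α : Type*} {p : ℝ} {E : Finset α}

noncomputable def bernoulliExp (p : ℝ) (E : Finset α) (X : Finset α → ℝ) : ℝ :=
  ∑ F ∈ E.powerset, p ^ #F * (1 - p) ^ (#E - #F) * X F

theorem bernoulliExp_congr {X Y : Finset α → ℝ} (h : ∀ F ⊆ E, X F = Y F) :
    bernoulliExp p E X = bernoulliExp p E Y :=
  sum_congr rfl fun F hF => by rw [h F (mem_powerset.mp hF)]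

theorem bernoulliExp_mono (hp0 : 0 ≤ p) (hp1 : p ≤ 1) {X Y : Finset α → ℝ}
    (h : ∀ F ⊆ E, X F ≤ Y F) : bernoulliExp p E X ≤ bernoulliExp p E Y := by
  have : 0 ≤ 1 - p := by linarith
  exact sum_le_sum fun F hF => by gcongr; exact h F (mem_powerset.mp hF)

theorem bernoulliExp_pow_card (p z : ℝ) (E : Finset α) :
    bernoulliExp p E (fun F => z ^ #F) = (1 - p + p * z) ^ #E := by
  rw [bernoulliExp, sum_powerset_apply_card (fun j => p ^ j * (1 - p) ^ (#E - j) * z ^ j),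
    show 1 - p + p * z = p * z + (1 - p) by ring, add_pow]
  refine sum_congr rfl fun j _ => ?_
  rw [nsmul_eq_mul, mul_pow]
  ring

theorem bernoulliExp_affine (a b : ℝ) (X : Finset α → ℝ) :
    bernoulliExp p E (fun F => a + b * X F) = a + b * bernoulliExp p E X := by
  have hmass : ∑ F ∈ E.powerset, p ^ #F * (1 - p) ^ (#E - #F) = 1 := by
    simpa [bernoulliExp] using bernoulliExp_pow_card p 1 E
  simp only [bernoulliExp, mul_add, sum_add_distrib, ← sum_mul, hmass, mul_sum]
  congr 1
  · ring
  · exact sum_congr rfl fun F _ => by ring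

theorem bernoulliExp_const (c : ℝ) : bernoulliExp p E (fun _ => c) = c := by
  simpa using bernoulliExp_affine (p := p) (E := E) c 0 0

theorem bernoulliExp_union [DecidableEq α] {s t : Finset α} (hst : Disjoint s t)
    (X : Finset α → ℝ) :
    bernoulliExp p (s ∪ t) X =
      bernoulliExp p s (fun F₁ => bernoulliExp p t (fun F₂ => X (F₁ ∪ F₂))) := by
  simp only [bernoulliExp, mul_sum]
  rw [sum_powerset_union_of_disjoint hst]
  refine sum_congr rfl fun F₁ hF₁ => sum_congr rfl fun F₂ hF₂ => ?_
  rw [mem_powerset] at hF₁ hF₂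
  have h₁ := card_le_card hF₁
  have h₂ := card_le_card hF₂
  rw [card_union_of_disjoint hst, card_union_of_disjoint (hst.mono hF₁ hF₂),
    show #s + #t - (#F₁ + #F₂) = (#s - #F₁) + (#t - #F₂) by omega]
  ring

theorem bernoulliExp_pow_card_inter [DecidableEq α] {T : Finset α} (hT : T ⊆ E) (z : ℝ) :
    bernoulliExp p E (fun F => z ^ #(F ∩ T)) = (1 - p + p * z) ^ #T := by
  rw [← union_sdiff_of_subset hT, bernoulliExp_union disjoint_sdiff, ← bernoulliExp_pow_card]
  refine bernoulliExp_congr fun F₁ hF₁ => ?_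
  rw [← bernoulliExp_const (p := p) (E := E \ T) (z ^ #F₁)]
  refine bernoulliExp_congr fun F₂ hF₂ => ?_
  rw [show (F₁ ∪ F₂) ∩ T = F₁ by grind [subset_sdiff]]

open Classical in
noncomputable def bernoulliProb (p : ℝ) (E : Finset α) (A : Finset α → Prop) : ℝ :=
  bernoulliExp p E (fun F => if A F then 1 else 0)

theorem bernoulliProb_mono (hp0 : 0 ≤ p) (hp1 : p ≤ 1) {A B : Finset α → Prop}
    (h : ∀ F ⊆ E, A F → B F) : bernoulliProb p E A ≤ bernoulliProb p E B :=
  bernoulliExp_mono hp0 hp1 fun F hF => by split_ifs <;> grind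

theorem bernoulliProb_nonneg (hp0 : 0 ≤ p) (hp1 : p ≤ 1) (A : Finset α → Prop) :
    0 ≤ bernoulliProb p E A := by
  calc 0 = bernoulliExp p E (fun _ => 0) := (bernoulliExp_const 0).symm
    _ ≤ _ := bernoulliExp_mono hp0 hp1 fun F _ => by split_ifs <;> norm_num

theorem bernoulliProb_eq_one {A : Finset α → Prop} (h : ∀ F ⊆ E, A F) :
    bernoulliProb p E A = 1 := by
  rw [bernoulliProb, bernoulliExp_congr (Y := fun _ => 1) fun F hF => if_pos (h F hF),
    bernoulliExp_const]

theorem bernoulliProb_union [DecidableEq α] {s t : Finset α} (hst : Disjoint s t)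
    (A : Finset α → Prop) :
    bernoulliProb p (s ∪ t) A =
      bernoulliExp p s (fun F₁ => bernoulliProb p t (fun F₂ => A (F₁ ∪ F₂))) :=
  bernoulliExp_union hst _

end Bernoulli

theorem percProb_eq_bernoulliProb [Fintype V] (G : SimpleGraph V) (p : ℝ)
    (A : SimpleGraph V → Prop) :
    percProb G p A = bernoulliProb p (edgeFins G) (fun F => A (SimpleGraph.fromEdgeSet ↑F)) :=
  sum_congr rfl fun F _ => by rw [mul_ite, mul_one, mul_zero]

section ReachSet

open SimpleGraph

def reachSet (H : SimpleGraph V) (A : Finset V) : Set V := {x | ∃ a ∈ A, H.Reachable a x}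

theorem reachSet_singleton (H : SimpleGraph V) (v : V) :
    reachSet H {v} = {x | H.Reachable v x} := by
  simp [reachSet]

theorem card_le_ncard_reachSet [Finite V] (H : SimpleGraph V) (A : Finset V) :
    #A ≤ (reachSet H A).ncard := by
  rw [← Set.ncard_coe_finset]
  exact Set.ncard_le_ncard (fun a ha => ⟨a, ha, .refl a⟩) (Set.toFinite _)

theorem ncard_reachSet_erase_union_add_one_le [Finite V] [DecidableEq V] {H H' : SimpleGraph V}
    (hle : H' ≤ H) {A S : Finset V} {u : V} (hu : u ∈ A) (hS : ∀ x ∈ S, H.Adj u x)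
    (hiso : ∀ x, ¬H'.Adj u x) :
    (reachSet H' (A.erase u ∪ S)).ncard + 1 ≤ (reachSet H A).ncard := by
  have hnot : u ∉ reachSet H' (A.erase u ∪ S) := by
    rintro ⟨a, ha, hr⟩
    have hau : a ≠ u := by
      rintro rfl
      rcases mem_union.mp ha with ha | ha
      · exact notMem_erase a A ha
      · exact H.loopless.irrefl a (hS a ha)
    obtain ⟨x, hx⟩ := hr.nonempty_neighborSet_right hau
    exact hiso x hx
  have hsub : insert u (reachSet H' (A.erase u ∪ S)) ⊆ reachSet H A := by
    rintro x (rfl | ⟨a, ha, hr⟩)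
    · exact ⟨x, hu, .refl x⟩
    · rcases mem_union.mp ha with ha | ha
      · exact ⟨a, mem_of_mem_erase ha, hr.mono hle⟩
      · exact ⟨u, hu, (hS a ha).reachable.trans (hr.mono hle)⟩
  calc _ = (insert u (reachSet H' (A.erase u ∪ S))).ncard :=
        (Set.ncard_insert_of_notMem hnot (Set.toFinite _)).symm
    _ ≤ _ := Set.ncard_le_ncard hsub (Set.toFinite _)

/-- The new active set after exploring `u`: the other active vertices, together with the
vertices of `X` joined to `u` by an edge of `F₁`. -/
theorem exists_next_active [Finite V] [DecidableEq V] {W A X : Finset V} {u : V} (hu : u ∈ A)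
    (hAW : Disjoint A W) (hX : Disjoint X (W ∪ A)) (F₁ : Finset (Sym2 V)) :
    ∃ A' : Finset V, Disjoint A' (insert u W) ∧ #A - 1 + #(F₁ ∩ X.image (s(u, ·))) ≤ #A' ∧
      ∀ F₂ : Finset (Sym2 V), (∀ e ∈ F₂, u ∉ e) →
        (reachSet (fromEdgeSet ↑F₂) A').ncard + 1 ≤
          (reachSet (fromEdgeSet ↑(F₁ ∪ F₂)) A).ncard := by
  set S := X.filter (s(u, ·) ∈ F₁)
  obtain ⟨hSW, hSA⟩ : Disjoint S W ∧ Disjoint S A :=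
    disjoint_union_right.mp (hX.mono_left (filter_subset _ _))
  refine ⟨A.erase u ∪ S, ?_, ?_, fun F₂ hF₂ => ?_⟩
  · rw [disjoint_union_left, disjoint_insert_right, disjoint_insert_right]
    exact ⟨⟨notMem_erase u A, hAW.mono_left (erase_subset u A)⟩,
      fun h => disjoint_left.mp hSA h hu, hSW⟩
  · rw [card_union_of_disjoint (hSA.symm.mono_left (erase_subset u A)), card_erase_of_mem hu,
      inter_comm, ← filter_mem_eq_inter, filter_image,
      card_image_of_injective _ fun x y h => Sym2.congr_right.mp h]
  · refine ncard_reachSet_erase_union_add_one_le ?_ hu (fun x hx => ?_) (fun x hx => ?_)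
    · exact fromEdgeSet_mono (by simp)
    · rw [fromEdgeSet_adj]
      refine ⟨by simp [(mem_filter.mp hx).2], ?_⟩
      rintro rfl
      exact disjoint_left.mp hSA hx hu
    · rw [fromEdgeSet_adj] at hx
      exact hF₂ _ hx.1 (Sym2.mem_mk_left u x)

end ReachSet

section Exploration

open SimpleGraph

variable [Fintype V]

theorem degAt_eq_card_neighborFinset (G : SimpleGraph V) [DecidableRel G.Adj] (u : V) :
    degAt G u = #(G.neighborFinset u) := by
  rw [degAt, ← Set.ncard_coe_finset, coe_neighborFinset]
  rfl

variable [DecidableEq V]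

noncomputable def edgesAvoiding (G : SimpleGraph V) (W : Finset V) : Finset (Sym2 V) :=
  (edgeFins G).filter (fun e => ∀ x ∈ e, x ∉ W)

theorem edgesAvoiding_empty (G : SimpleGraph V) : edgesAvoiding G ∅ = edgeFins G :=
  filter_true_of_mem fun _ _ _ _ => notMem_empty _

theorem filter_notMem_edgesAvoiding (G : SimpleGraph V) (W : Finset V) (u : V) :
    (edgesAvoiding G W).filter (u ∉ ·) = edgesAvoiding G (insert u W) := by
  ext e
  simp only [edgesAvoiding, mem_filter, mem_insert]
  grind

theorem bernoulliProb_edgesAvoiding (p : ℝ) (G : SimpleGraph V) (W : Finset V) (u : V)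
    (A : Finset (Sym2 V) → Prop) :
    bernoulliProb p (edgesAvoiding G W) A = bernoulliExp p ((edgesAvoiding G W).filter (u ∈ ·))
      (fun F₁ => bernoulliProb p (edgesAvoiding G (insert u W)) (fun F₂ => A (F₁ ∪ F₂))) := by
  rw [← filter_notMem_edgesAvoiding, ← bernoulliProb_union (disjoint_filter_filter_not _ _ _),
    filter_union_filter_not_eq]

theorem image_neighborFinset_sdiff_subset {G : SimpleGraph V} [DecidableRel G.Adj]
    {W B : Finset V} {u : V} (huW : u ∉ W) (hWB : W ⊆ B) :
    (G.neighborFinset u \ B).image (s(u, ·)) ⊆ (edgesAvoiding G W).filter (u ∈ ·) := by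
  simp only [subset_iff, mem_image, mem_sdiff, mem_neighborFinset]
  rintro _ ⟨x, ⟨hux, hxB⟩, rfl⟩
  refine mem_filter.mpr ⟨mem_filter.mpr ⟨(Set.Finite.mem_toFinset _).mpr hux, ?_⟩,
    Sym2.mem_mk_left u x⟩
  rintro y hy
  rcases Sym2.mem_iff.mp hy with rfl | rfl
  exacts [huW, fun h => hxB (hWB h)]

theorem le_card_neighborFinset_sdiff {G : SimpleGraph V} [DecidableRel G.Adj] {d : ℕ} {u : V}
    (hdeg : d ≤ degAt G u) {B : Finset V} (hu : u ∈ B) :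
    d + 1 ≤ #(G.neighborFinset u \ B) + #B := by
  rw [degAt_eq_card_neighborFinset] at hdeg
  have hinter : G.neighborFinset u ∩ B ⊆ B.erase u := fun x hx => by
    rw [mem_inter, mem_neighborFinset] at hx
    exact mem_erase.mpr ⟨(G.ne_of_adj hx.1).symm, hx.2⟩
  have := card_le_card hinter
  have := card_sdiff_add_card_inter (G.neighborFinset u) B
  have := card_erase_of_mem hu
  have := card_pos.mpr ⟨u, hu⟩
  omega

/-- Exploration with explored vertices `W` (all their edges already revealed, so only
`edgesAvoiding G W` is still random) and active vertices `A`: the probability that at least `k`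
vertices get explored or reached. -/
noncomputable def explorationProb (G : SimpleGraph V) (p : ℝ) (k : ℕ) (W A : Finset V) : ℝ :=
  bernoulliProb p (edgesAvoiding G W)
    (fun F => k ≤ #W + (reachSet (fromEdgeSet ↑F) A).ncard)

variable {G : SimpleGraph V} {d k m : ℕ} {p z : ℝ}

theorem one_sub_pow_le_explorationProb_step (hp0 : 0 ≤ p) (hp1 : p ≤ 1) (hz0 : 0 ≤ z)
    (hz1 : z ≤ 1) (hdeg : ∀ v, d ≤ degAt G v) (hm : m ≤ d + 2 - k)
    (hz : (1 - p + p * z) ^ m ≤ z) {W A : Finset V} {u : V} (hu : u ∈ A) (hAW : Disjoint A W)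
    (hk : #W + #A < k)
    (ih : ∀ A', Disjoint A' (insert u W) → 1 - z ^ #A' ≤ explorationProb G p k (insert u W) A') :
    1 - z ^ #A ≤ explorationProb G p k W A := by
  classical
  have huW : u ∉ W := disjoint_left.mp hAW hu
  have hfresh := le_card_neighborFinset_sdiff (hdeg u) (mem_union_right W hu)
  set T := (G.neighborFinset u \ (W ∪ A)).image (s(u, ·))
  have hT : T ⊆ _ := image_neighborFinset_sdiff_subset huW subset_union_left
  have hmT : m ≤ #T := by
    have := card_union_le W A
    rw [card_image_of_injective _ fun x y h => Sym2.congr_right.mp h]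
    omega
  have hbranch : ∀ F₁, 1 + -z ^ (#A - 1) * z ^ #(F₁ ∩ T) ≤
      bernoulliProb p (edgesAvoiding G (insert u W))
        (fun F₂ => k ≤ #W + (reachSet (fromEdgeSet ↑(F₁ ∪ F₂)) A).ncard) := by
    intro F₁
    obtain ⟨A', hA'W, hA'card, hreach⟩ := exists_next_active hu hAW sdiff_disjoint F₁
    calc 1 + -z ^ (#A - 1) * z ^ #(F₁ ∩ T) = 1 - z ^ (#A - 1 + #(F₁ ∩ T)) := by
          rw [pow_add]; ring
      _ ≤ 1 - z ^ #A' := sub_le_sub_left (pow_le_pow_of_le_one hz0 hz1 hA'card) 1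
      _ ≤ _ := ih A' hA'W
      _ ≤ _ := bernoulliProb_mono hp0 hp1 fun F₂ hF₂ h => by
        have := hreach F₂ fun e he hue => (mem_filter.mp (hF₂ he)).2 u hue (mem_insert_self u W)
        rw [card_insert_of_notMem huW] at h
        omega
  have hpgf : (1 - p + p * z) ^ #T ≤ z :=
    (pow_le_pow_of_le_one (by nlinarith) (by nlinarith) hmT).trans hz
  calc 1 - z ^ #A = 1 + -z ^ (#A - 1) * z := by
        nth_rewrite 1 [← Nat.sub_add_cancel (card_pos.mpr ⟨u, hu⟩)]
        ring
    _ ≤ 1 + -z ^ (#A - 1) * (1 - p + p * z) ^ #T := by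
        have : 0 ≤ z ^ (#A - 1) := pow_nonneg hz0 _
        nlinarith
    _ = bernoulliExp p ((edgesAvoiding G W).filter (u ∈ ·))
          (fun F₁ => 1 + -z ^ (#A - 1) * z ^ #(F₁ ∩ T)) := by
        rw [bernoulliExp_affine, bernoulliExp_pow_card_inter hT]
    _ ≤ _ := bernoulliExp_mono hp0 hp1 fun F₁ _ => hbranch F₁
    _ = _ := by rw [explorationProb, bernoulliProb_edgesAvoiding _ _ _ u]

theorem one_sub_pow_le_explorationProb (hp0 : 0 ≤ p) (hp1 : p ≤ 1) (hz0 : 0 ≤ z) (hz1 : z ≤ 1)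
    (hdeg : ∀ v, d ≤ degAt G v) (hm : m ≤ d + 2 - k) (hz : (1 - p + p * z) ^ m ≤ z)
    (W A : Finset V) (hAW : Disjoint A W) : 1 - z ^ #A ≤ explorationProb G p k W A := by
  by_cases hk : k ≤ #W + #A
  · refine (sub_le_self _ (pow_nonneg hz0 _)).trans (bernoulliProb_eq_one fun F _ => ?_).ge
    have := card_le_ncard_reachSet (fromEdgeSet (F : Set (Sym2 V))) A
    omega
  obtain rfl | ⟨u, hu⟩ := A.eq_empty_or_nonempty
  · rw [card_empty, pow_zero, sub_self]
    exact bernoulliProb_nonneg hp0 hp1 _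
  have huW : u ∉ W := disjoint_left.mp hAW hu
  exact one_sub_pow_le_explorationProb_step hp0 hp1 hz0 hz1 hdeg hm hz hu hAW (by omega)
    fun A' hA' => one_sub_pow_le_explorationProb hp0 hp1 hz0 hz1 hdeg hm hz (insert u W) A' hA'
termination_by k - #W
decreasing_by rw [card_insert_of_notMem huW]; omega

end Exploration

theorem one_sub_le_percProb_compCard [Fintype V] {G : SimpleGraph V} {d k m : ℕ}
    {p z : ℝ} (hp0 : 0 ≤ p) (hp1 : p ≤ 1) (hz0 : 0 ≤ z) (hz1 : z ≤ 1)
    (hdeg : ∀ v, d ≤ degAt G v) (hm : m ≤ d + 2 - k) (hz : (1 - p + p * z) ^ m ≤ z) (v : V) :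
    1 - z ≤ percProb G p (fun H => k ≤ compCard H v) := by
  classical
  have := one_sub_pow_le_explorationProb hp0 hp1 hz0 hz1 hdeg hm hz ∅ {v} (disjoint_empty_right _)
  rw [explorationProb, edgesAvoiding_empty, card_singleton, pow_one] at this
  simpa [percProb_eq_bernoulliProb, compCard, reachSet_singleton] using this

theorem percProb_mono [Fintype V] {G : SimpleGraph V} {p : ℝ} (hp0 : 0 ≤ p)
    (hp1 : p ≤ 1) {A B : SimpleGraph V → Prop} (h : ∀ H, A H → B H) :
    percProb G p A ≤ percProb G p B := by
  simpa only [percProb_eq_bernoulliProb] using bernoulliProb_mono hp0 hp1 fun F _ => h _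

section FixedPoint

open Real

theorem lt_one_sub_exp_of_lt_fixedPoint {c y w : ℝ} (hc : 0 < c) (hy : 0 < y)
    (hfix : y = 1 - exp (-c * y)) (hw : 0 < w) (hwy : w < y) : w < 1 - exp (-c * w) := by
  have ht0 : 0 < w / y := div_pos hw hy
  have ht1 : w / y < 1 := (div_lt_one hy).mpr hwy
  have hconv := strictConvexOn_exp.2 (Set.mem_univ 0) (Set.mem_univ (-c * y))
    (by nlinarith) (sub_pos.mpr ht1) ht0 (by ring)
  simp only [smul_eq_mul, mul_zero, exp_zero, mul_one, zero_add] at hconv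
  rw [show w / y * (-c * y) = -c * w by field_simp, show exp (-c * y) = 1 - y by linarith] at hconv
  have : 1 - w / y + w / y * (1 - y) = 1 - w := by field_simp; ring
  linarith

theorem fixedPoint_unique {c y₁ y₂ : ℝ} (hc : 0 < c) (hy₁ : 0 < y₁) (hy₂ : 0 < y₂)
    (hfix₁ : y₁ = 1 - exp (-c * y₁)) (hfix₂ : y₂ = 1 - exp (-c * y₂)) : y₁ = y₂ := by
  by_contra hne
  rcases lt_or_gt_of_ne hne with h | h
  · exact (lt_one_sub_exp_of_lt_fixedPoint hc hy₂ hfix₂ hy₁ h).ne hfix₁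
  · exact (lt_one_sub_exp_of_lt_fixedPoint hc hy₁ hfix₁ hy₂ h).ne hfix₂

end FixedPoint

section Asymptotics

open Real Filter Topology

theorem tendsto_ceil_sqrt_div_atTop :
    Tendsto (fun d : ℕ => (⌈√(d : ℝ)⌉₊ : ℝ) / d) atTop (𝓝 0) := by
  have h2 : Tendsto (fun d : ℕ => 2 / √(d : ℝ)) atTop (𝓝 0) :=
    tendsto_const_nhds.div_atTop (tendsto_sqrt_atTop.comp tendsto_natCast_atTop_atTop)
  refine tendsto_of_tendsto_of_tendsto_of_le_of_le' tendsto_const_nhds h2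
    (.of_forall fun d => by positivity) ?_
  filter_upwards [eventually_ge_atTop 1] with d hd
  have hs : 1 ≤ √(d : ℝ) := one_le_sqrt.mpr (by exact_mod_cast hd)
  have hceil := Nat.ceil_lt_add_one (sqrt_nonneg (d : ℝ))
  have hsq := mul_self_sqrt (Nat.cast_nonneg d : (0 : ℝ) ≤ d)
  rw [div_le_div_iff₀ (by positivity) (by positivity)]
  nlinarith

theorem eventually_one_sub_mul_pow_le {c w : ℝ} (hc : 0 < c) (hw : 0 < w)
    (hgap : exp (-c * w) < 1 - w) :
    ∀ᶠ d : ℕ in atTop, ∀ p : ℝ, c / d ≤ p → p ≤ 1 →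
      (1 - p * w) ^ (d - ⌈√(d : ℝ)⌉₊) ≤ 1 - w := by
  have hw1 : 0 < 1 - w := (exp_pos _).trans hgap
  have hlog : -c * w < log (1 - w) := (lt_log_iff_exp_lt hw1).mpr hgap
  set θ := -log (1 - w) / (c * w) with hθdef
  have hθ0 : 0 < θ := div_pos (neg_pos.mpr (log_neg hw1 (by linarith))) (by positivity)
  have hθ : θ < 1 := by rw [div_lt_one (by positivity)]; linarith
  filter_upwards [tendsto_ceil_sqrt_div_atTop.eventually (gt_mem_nhds (sub_pos.mpr hθ)),
    eventually_gt_atTop 0] with d hd hd0 p hp hp1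
  set k := ⌈√(d : ℝ)⌉₊
  have hdpos : (0 : ℝ) < d := by exact_mod_cast hd0
  rw [div_lt_iff₀ hdpos] at hd
  have hθd : θ * d ≤ ((d - k : ℕ) : ℝ) := by
    have hkd : k ≤ d := by
      have : (k : ℝ) < d := by nlinarith
      exact_mod_cast this.le
    rw [Nat.cast_sub hkd]
    linarith
  have hpm : -log (1 - w) ≤ p * w * (d - k : ℕ) := by
    have := mul_le_mul hp hθd (by positivity) (hp.trans' (by positivity))
    calc -log (1 - w) = c / d * (θ * d) * w := by rw [hθdef]; field_simp
      _ ≤ p * (d - k : ℕ) * w := by gcongr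
      _ = _ := by ring
  calc (1 - p * w) ^ (d - k) ≤ exp (-(p * w)) ^ (d - k) :=
        pow_le_pow_left₀ (by nlinarith) (by linarith [add_one_le_exp (-(p * w))]) _
    _ = exp (-(p * w * (d - k : ℕ))) := by rw [← exp_nat_mul]; ring_nf
    _ ≤ exp (log (1 - w)) := exp_le_exp.mpr (by linarith)
    _ = 1 - w := exp_log hw1

end Asymptotics

/-- for large `d`, in any `d`-regular graph with `(1+ε)/d ≤ p ≤ 1` the
probability that a fixed vertex lies in a component of order at least `d^{1/2}` is at
least `y(ε) - δ`. -/
theorem stmt_15 (ε : ℝ) (hε : 0 < ε) (δ : ℝ) (hδ : 0 < δ) :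
    ∃ d₀ : ℕ, ∀ d : ℕ, d₀ ≤ d →
      ∀ (V : Type) [Fintype V] (G : SimpleGraph V), IsRegOfDeg G d →
      ∀ v : V, ∀ p : ℝ, (1 + ε) / (d : ℝ) ≤ p → p ≤ 1 →
      ∀ y : ℝ, 0 < y → y < 1 → y = 1 - Real.exp (-(1 + ε) * y) →
      y - δ ≤ percProb G p
        (fun H => (d : ℝ) ^ ((1 : ℝ) / 2) ≤ (compCard H v : ℝ)) := by
  have hc : 0 < 1 + ε := by linarith
  by_cases hex : ∃ y₀ : ℝ, 0 < y₀ ∧ y₀ = 1 - Real.exp (-(1 + ε) * y₀)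
  swap
  · exact ⟨0, fun d _ V _ G _ v p _ _ y hy _ hfix => absurd ⟨y, hy, hfix⟩ hex⟩
  obtain ⟨y₀, hy₀, hfix₀⟩ := hex
  set w := y₀ - min δ y₀ / 2 with hw_def
  have hmin : 0 < min δ y₀ := lt_min hδ hy₀
  have hw : 0 < w := by linarith [min_le_right δ y₀]
  have hδw : y₀ - δ ≤ w := by linarith [min_le_left δ y₀]
  have hgap := lt_one_sub_exp_of_lt_fixedPoint hc hy₀ hfix₀ hw (by linarith)
  obtain ⟨d₀, hd₀⟩ := Filter.eventually_atTop.mp (eventually_one_sub_mul_pow_le hc hw (by linarith))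
  refine ⟨d₀, fun d hd V _ G hreg v p hp hp1 y hy _ hfix => ?_⟩
  obtain rfl := fixedPoint_unique hc hy hy₀ hfix hfix₀
  have hp0 : 0 ≤ p := (div_nonneg hc.le d.cast_nonneg).trans hp
  have hpgf : (1 - p + p * (1 - w)) ^ (d - ⌈√(d : ℝ)⌉₊) ≤ 1 - w := by
    convert hd₀ d hd p hp hp1 using 2
    ring
  calc y - δ ≤ 1 - (1 - w) := by linarith
    _ ≤ percProb G p (fun H => ⌈√(d : ℝ)⌉₊ ≤ compCard H v) :=
        one_sub_le_percProb_compCard hp0 hp1 (by linarith) (by linarith) (fun u => (hreg u).ge)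
          (by omega) hpgf v
    _ ≤ _ := percProb_mono hp0 hp1 fun H h => by
        rw [← Real.sqrt_eq_rpow]
        exact (Nat.le_ceil _).trans (by exact_mod_cast h)
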